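/- Let L be a closed chain link with k = p + q ≥ 3 components arranged in a cycle, where each component is an unknotted circle and consecutive components form a Hopf link (so each component has linking number ±1 with exactly two other components, and linking number 0 with all others). Then every diagram of L has at least 4 crossings involving each component, and hence the crossing number of L is at least 2(p+q). -/

import Mathlib

/-! Each component has linking number ±1 with two others, and a pair of components with
linking number ±1 crosses at least twice in any diagram; so every component lies on at least
4 crossings. Summing over the components counts each crossing at most twice. -/

/-- An abstract theory of links, diagrams and linking numbers, bundling the standard
geometric facts used in the argument. -/
structure ChainLinkTheory where
  Link : Type
  Diagram : Type
  Component : Type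
  linkOf : Diagram → Link
  crossings : Diagram → ℕ
  componentsOf : Link → Finset Component
  Unknotted : Component → Prop
  lk : Component → Component → ℤ
  /-- number of crossings of a diagram involving a given component -/
  crossingsInvolving : Diagram → Component → ℕ
  /-- number of crossings between two distinct components -/
  crossingsBetween : Diagram → Component → Component → ℕ
  /-- a diagram needs at least 2·|lk(c,c')| crossings between components c and c' -/
  lk_le_crossingsBetween : ∀ d c c', c ∈ componentsOf (linkOf d) →
    c' ∈ componentsOf (linkOf d) → c ≠ c' →
    2 * (lk c c').natAbs ≤ crossingsBetween d c c'
  /-- crossings between c and distinct components are among the crossings involving c -/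
  sum_between_le : ∀ d c (s : Finset Component), c ∉ s → s ⊆ componentsOf (linkOf d) →
    ∑ c' ∈ s, crossingsBetween d c c' ≤ crossingsInvolving d c
  /-- each crossing involves at most two components -/
  sum_involving_le : ∀ d, ∑ c ∈ componentsOf (linkOf d), crossingsInvolving d c ≤
    2 * crossings d
  crossingNumber : Link → ℕ
  crossingNumber_spec : ∀ L, ∃ d, linkOf d = L ∧ crossings d = crossingNumber L

namespace ChainLinkTheory

variable (𝒯 : ChainLinkTheory)

theorem sum_two_mul_natAbs_lk_le_crossingsInvolving (d : 𝒯.Diagram) {c : 𝒯.Component}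
    {s : Finset 𝒯.Component} (hc : c ∈ 𝒯.componentsOf (𝒯.linkOf d)) (hcs : c ∉ s)
    (hs : s ⊆ 𝒯.componentsOf (𝒯.linkOf d)) :
    ∑ c' ∈ s, 2 * (𝒯.lk c c').natAbs ≤ 𝒯.crossingsInvolving d c :=
  calc ∑ c' ∈ s, 2 * (𝒯.lk c c').natAbs
      ≤ ∑ c' ∈ s, 𝒯.crossingsBetween d c c' :=
        Finset.sum_le_sum fun c' hc' =>
          𝒯.lk_le_crossingsBetween d c c' hc (hs hc') fun h => hcs (h ▸ hc')
    _ ≤ 𝒯.crossingsInvolving d c := 𝒯.sum_between_le d c s hcs hs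

theorem two_mul_card_le_crossingsInvolving (d : 𝒯.Diagram) {c : 𝒯.Component}
    {s : Finset 𝒯.Component} (hc : c ∈ 𝒯.componentsOf (𝒯.linkOf d)) (hcs : c ∉ s)
    (hs : s ⊆ 𝒯.componentsOf (𝒯.linkOf d)) (hlk : ∀ c' ∈ s, (𝒯.lk c c').natAbs = 1) :
    2 * s.card ≤ 𝒯.crossingsInvolving d c := by
  have h := 𝒯.sum_two_mul_natAbs_lk_le_crossingsInvolving d hc hcs hs
  rwa [Finset.sum_congr rfl fun c' hc' => by rw [hlk c' hc'], Finset.sum_const, smul_eq_mul,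
    mul_comm] at h

theorem mul_card_le_two_mul_crossings (d : 𝒯.Diagram) {m : ℕ}
    (hm : ∀ c ∈ 𝒯.componentsOf (𝒯.linkOf d), m ≤ 𝒯.crossingsInvolving d c) :
    m * (𝒯.componentsOf (𝒯.linkOf d)).card ≤ 2 * 𝒯.crossings d :=
  calc m * (𝒯.componentsOf (𝒯.linkOf d)).card
      = ∑ _c ∈ 𝒯.componentsOf (𝒯.linkOf d), m := by rw [Finset.sum_const, smul_eq_mul, mul_comm]
    _ ≤ ∑ c ∈ 𝒯.componentsOf (𝒯.linkOf d), 𝒯.crossingsInvolving d c := Finset.sum_le_sum hm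
    _ ≤ 2 * 𝒯.crossings d := 𝒯.sum_involving_le d

theorem mul_card_le_two_mul_crossingNumber (L : 𝒯.Link) {m : ℕ}
    (hm : ∀ d, 𝒯.linkOf d = L → ∀ c ∈ 𝒯.componentsOf L, m ≤ 𝒯.crossingsInvolving d c) :
    m * (𝒯.componentsOf L).card ≤ 2 * 𝒯.crossingNumber L := by
  obtain ⟨d, rfl, hcr⟩ := 𝒯.crossingNumber_spec L
  rw [← hcr]
  exact 𝒯.mul_card_le_two_mul_crossings d (hm d rfl)

end ChainLinkTheory

theorem chain_crossing_number_general (𝒯 : ChainLinkTheory) (L : 𝒯.Link) (p q : ℕ)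
    (hcard : (𝒯.componentsOf L).card = p + q)
    (hlk : ∀ c ∈ 𝒯.componentsOf L, ∃ s : Finset 𝒯.Component,
      s ⊆ 𝒯.componentsOf L ∧ s.card = 2 ∧ c ∉ s ∧
      (∀ c' ∈ s, (𝒯.lk c c').natAbs = 1) ∧
      (∀ c' ∈ 𝒯.componentsOf L, c' ∉ s → c' ≠ c → 𝒯.lk c c' = 0)) :
    (∀ d, 𝒯.linkOf d = L → ∀ c ∈ 𝒯.componentsOf L, 4 ≤ 𝒯.crossingsInvolving d c) ∧
    2 * (p + q) ≤ 𝒯.crossingNumber L := by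
  have four_le : ∀ d, 𝒯.linkOf d = L → ∀ c ∈ 𝒯.componentsOf L,
      4 ≤ 𝒯.crossingsInvolving d c := by
    rintro d rfl c hc
    obtain ⟨s, hs, hs_card, hcs, hlk_s, -⟩ := hlk c hc
    simpa [hs_card] using 𝒯.two_mul_card_le_crossingsInvolving d hc hcs hs hlk_s
  refine ⟨four_le, ?_⟩
  have := 𝒯.mul_card_le_two_mul_crossingNumber L four_le
  omega

theorem chain_crossing_number (𝒯 : ChainLinkTheory) (L : 𝒯.Link) (p q : ℕ)
    (hcard : (𝒯.componentsOf L).card = p + q) (hk : 3 ≤ p + q)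
    (hunknot : ∀ c ∈ 𝒯.componentsOf L, 𝒯.Unknotted c)
    (hlk : ∀ c ∈ 𝒯.componentsOf L, ∃ s : Finset 𝒯.Component,
      s ⊆ 𝒯.componentsOf L ∧ s.card = 2 ∧ c ∉ s ∧
      (∀ c' ∈ s, (𝒯.lk c c').natAbs = 1) ∧
      (∀ c' ∈ 𝒯.componentsOf L, c' ∉ s → c' ≠ c → 𝒯.lk c c' = 0)) :
    (∀ d, 𝒯.linkOf d = L → ∀ c ∈ 𝒯.componentsOf L, 4 ≤ 𝒯.crossingsInvolving d c) ∧
    2 * (p + q) ≤ 𝒯.crossingNumber L :=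
  chain_crossing_number_general 𝒯 L p q hcard hlk
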